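/- The Schur determinant det(1/(λⱼ - j + i)!)_{1≤i,j≤r} associated to the exponential series equals f^λ / |λ|!, i.e. it equals the number of standard Young tableaux of shape λ divided by the factorial of the weight of λ. In particular this determinant is always a nonnegative rational number. -/

import Mathlib

open MvPolynomial
open scoped Classical

/-- `S n` : coefficients of `exp(∑ xᵢ tⁱ)`. -/
noncomputable def S : ℕ → MvPolynomial ℕ ℚ
  | 0 => 1
  | (n+1) => ((n+1 : ℚ))⁻¹ •
      ∑ i ∈ Finset.range (n+1), ((i+1 : ℚ)) • (X (i+1) * S (n - i))
  decreasing_by exact Nat.lt_succ_of_le (Nat.sub_le n i)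

noncomputable def Sint (m : ℤ) : MvPolynomial ℕ ℚ :=
  if 0 ≤ m then S m.toNat else 0

noncomputable def SchurPoly (μ : YoungDiagram) : MvPolynomial ℕ ℚ :=
  Matrix.det (Matrix.of fun i j : Fin (μ.colLen 0) =>
    Sint ((μ.rowLen j : ℤ) - (j : ℤ) + (i : ℤ)))

/-- number of standard Young tableaux of shape μ -/
noncomputable def fSYT (μ : YoungDiagram) : ℕ :=
  Set.ncard {T : {c // c ∈ μ.cells} ≃ Fin μ.card |
    ∀ c d : {c // c ∈ μ.cells}, (c : ℕ × ℕ).1 ≤ (d : ℕ × ℕ).1 →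
      (c : ℕ × ℕ).2 ≤ (d : ℕ × ℕ).2 → c ≠ d → T c < T d}

def toYD {n : ℕ} (p : n.Partition) : YoungDiagram :=
  YoungDiagram.ofRowLens (p.parts.sort (· ≥ ·)) (by apply List.Pairwise.sortedGE; exact Multiset.pairwise_sort ..)

noncomputable def einv (m : ℤ) : ℚ :=
  if 0 ≤ m then ((Nat.factorial m.toNat : ℚ))⁻¹ else 0

noncomputable def ExpDelta (μ : YoungDiagram) : ℚ :=
  Matrix.det (Matrix.of fun i j : Fin (μ.colLen 0) =>
    einv ((μ.rowLen j : ℤ) - (j : ℤ) + (i : ℤ)))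

def hookLen (μ : YoungDiagram) (c : ℕ × ℕ) : ℕ :=
  μ.rowLen c.1 - c.2 + (μ.colLen c.2 - c.1) - 1

noncomputable def hpoly (r m : ℕ) : MvPolynomial (Fin r) ℚ :=
  ∑ f ∈ Finset.univ.filter (fun f : Fin m → Fin r => ∀ i j, i ≤ j → f i ≤ f j),
    ∏ i, X (f i)

noncomputable def hpolyInt (r : ℕ) (m : ℤ) : MvPolynomial (Fin r) ℚ :=
  if 0 ≤ m then hpoly r m.toNat else 0

noncomputable def sPoly (r : ℕ) (μ : YoungDiagram) : MvPolynomial (Fin r) ℚ :=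
  Matrix.det (Matrix.of fun i j : Fin r => hpolyInt r ((μ.rowLen j : ℤ) - (j : ℤ) + (i : ℤ)))

noncomputable def Dop : ℕ → (MvPolynomial ℕ ℚ →ₗ[ℚ] MvPolynomial ℕ ℚ)
  | 0 => LinearMap.id
  | (n+1) => ((n+1 : ℚ))⁻¹ •
      ∑ i ∈ Finset.range (n+1), ((pderiv (i+1)).toLinearMap).comp (Dop (n - i))
  decreasing_by exact Nat.lt_succ_of_le (Nat.sub_le n i)

noncomputable def Xw (r : ℕ) (μ : YoungDiagram) : ExteriorAlgebra ℚ (Polynomial ℚ) :=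
  (List.ofFn fun k : Fin r =>
    ExteriorAlgebra.ι ℚ (Polynomial.X ^ (r - 1 - (k : ℕ) + μ.rowLen k))).prod

lemma einv_sub_one (m : ℤ) : einv (m - 1) = (m : ℚ) * einv m := by
  rcases lt_trichotomy m 0 with h | h | h
  · rw [einv, einv, if_neg (by omega), if_neg (by omega), mul_zero]
  · subst h; simp [einv]
  · rw [einv, einv, if_pos (by omega), if_pos (by omega)]
    have h1 : m.toNat = (m - 1).toNat + 1 := by omega
    rw [h1, Nat.factorial_succ]
    have h2 : ((m - 1).toNat + 1 : ℚ) = (m : ℚ) := by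
      exact_mod_cast (show ((m - 1).toNat : ℤ) + 1 = m by omega)
    push_cast
    rw [mul_inv, h2, ← mul_assoc, mul_inv_cancel₀ (by positivity), one_mul]

lemma einv_of_neg {m : ℤ} (h : m < 0) : einv m = 0 := by rw [einv, if_neg (by omega)]

lemma einv_zero : einv 0 = 1 := by simp [einv]

noncomputable def dmat (r : ℕ) (f : ℕ → ℤ) : Matrix (Fin r) (Fin r) ℚ :=
  Matrix.of fun i j : Fin r => einv (f j - j + i)

noncomputable def Dl (r : ℕ) (f : ℕ → ℤ) : ℚ := (dmat r f).det

lemma Dl_congr {r : ℕ} {f g : ℕ → ℤ} (h : ∀ j < r, f j = g j) : Dl r f = Dl r g := by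
  unfold Dl dmat
  congr 1
  ext i j
  simp only [Matrix.of_apply]
  rw [h j j.2]

lemma detRec (r : ℕ) (f : ℕ → ℤ) :
    (∑ j : Fin r, (f j : ℚ)) * Dl r f =
      ∑ j : Fin r, Dl r (Function.update f (j : ℕ) (f j - 1)) := by
  classical
  set A := dmat r f with hA
  have hup : ∀ j : Fin r, dmat r (Function.update f (j : ℕ) (f j - 1)) =
      A.updateCol j (fun i : Fin r => einv (f j - 1 - (j : ℤ) + i)) := by
    intro j
    ext i j'
    by_cases h : j' = j
    · subst h
      simp [dmat, Matrix.updateCol_apply, Function.update_self]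
    · have hne : (j' : ℕ) ≠ (j : ℕ) := fun hc => h (Fin.ext hc)
      simp [dmat, Matrix.updateCol_apply, h, Function.update_of_ne hne, hA]
  have hsplit : ∀ j : Fin r,
      (A.updateCol j (fun i : Fin r => einv (f j - 1 - (j : ℤ) + i))).det
        = (((f j : ℚ) - (j : ℚ)) * A.det)
          + (A.updateCol j (fun i : Fin r => (i : ℚ) * A i j)).det := by
    intro j
    have hcol : (fun i : Fin r => einv (f j - 1 - (j : ℤ) + i))
        = (fun i : Fin r => (((f j : ℚ) - (j : ℚ)) • A i j))
          + (fun i : Fin r => (i : ℚ) * A i j) := by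
      funext i
      have h1 : f j - 1 - (j : ℤ) + i = (f j - (j : ℤ) + i) - 1 := by ring
      rw [h1, einv_sub_one]
      have h2 : ((f j - (j : ℤ) + i : ℤ) : ℚ) = ((f j : ℚ) - (j : ℚ) + (i : ℚ)) := by
        push_cast; ring
      rw [h2]
      simp only [Pi.add_apply, smul_eq_mul, hA, dmat, Matrix.of_apply]
      ring
    rw [hcol, Matrix.det_updateCol_add]
    rw [show (fun i : Fin r => (((f j : ℚ) - (j : ℚ)) • A i j))
        = ((f j : ℚ) - (j : ℚ)) • (fun i : Fin r => A i j) from rfl]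
    rw [Matrix.det_updateCol_smul, Matrix.updateCol_eq_self]
  have htr : ∑ j : Fin r, (A.updateCol j (fun i : Fin r => (i : ℚ) * A i j)).det
      = A.det * ∑ i : Fin r, (i : ℚ) := by
    have hB : ∀ j : Fin r, (fun i : Fin r => (i : ℚ) * A i j)
        = (fun i : Fin r => (Matrix.diagonal (fun k : Fin r => (k : ℚ)) * A) i j) := by
      intro j; funext i; rw [Matrix.diagonal_mul]
    calc ∑ j : Fin r, (A.updateCol j (fun i : Fin r => (i : ℚ) * A i j)).det
        = ∑ j : Fin r, Matrix.mulVec (Matrix.adjugate A)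
            (fun i : Fin r => (Matrix.diagonal (fun k : Fin r => (k : ℚ)) * A) i j) j := by
          refine Finset.sum_congr rfl fun j _ => ?_
          rw [← Matrix.cramer_apply, hB j, Matrix.cramer_eq_adjugate_mulVec]
      _ = Matrix.trace (Matrix.adjugate A * (Matrix.diagonal (fun k : Fin r => (k : ℚ)) * A)) := by
          simp [Matrix.trace, Matrix.diag, Matrix.mulVec, Matrix.mul_apply, dotProduct]
      _ = A.det * ∑ i : Fin r, (i : ℚ) := by
          rw [← Matrix.mul_assoc, Matrix.trace_mul_comm, ← Matrix.mul_assoc,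
            Matrix.mul_adjugate, Matrix.smul_mul, Matrix.one_mul, Matrix.trace_smul,
            Matrix.trace_diagonal]
          simp [smul_eq_mul]
  have key : ∑ j : Fin r, Dl r (Function.update f (j : ℕ) (f j - 1))
      = (∑ j : Fin r, ((f j : ℚ) - (j : ℚ))) * A.det + A.det * ∑ i : Fin r, (i : ℚ) := by
    rw [Finset.sum_mul, ← htr, ← Finset.sum_add_distrib]
    refine Finset.sum_congr rfl fun j _ => ?_
    rw [Dl, hup j, hsplit j]
  have hD : Dl r f = A.det := by rw [Dl, hA]
  rw [key, hD, Finset.sum_sub_distrib]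
  ring

lemma Dl_pad (r : ℕ) (f : ℕ → ℤ) (hf : f r = 0) : Dl (r + 1) f = Dl r f := by
  rw [Dl, Dl, Matrix.det_succ_column _ (Fin.last r)]
  rw [Finset.sum_eq_single (Fin.last r)]
  · have h0 : dmat (r + 1) f (Fin.last r) (Fin.last r) = 1 := by
      simp [dmat, Fin.last, hf, einv_zero]
    rw [h0]
    have h1 : ((-1 : ℚ) ^ ((Fin.last r : ℕ) + (Fin.last r : ℕ))) = 1 := by
      rw [show (Fin.last r : ℕ) + (Fin.last r : ℕ) = 2 * r from by simp [Fin.last]; ring]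
      rw [pow_mul]; norm_num
    rw [h1, one_mul, one_mul]
    congr 1
    ext i j
    simp [dmat, Matrix.submatrix, Fin.succAbove_last, Fin.coe_castSucc]
  · intro i _ hi
    have h0 : dmat (r + 1) f i (Fin.last r) = 0 := by
      have hlt : (i : ℕ) < r := by
        have := i.2; rcases Nat.lt_succ_iff_lt_or_eq.mp this with h | h
        · exact h
        · exact absurd (Fin.ext h) hi
      have : f r - (r : ℤ) + (i : ℕ) < 0 := by rw [hf]; omega
      simp [dmat, Fin.last, einv_of_neg this]
    rw [h0, mul_zero, zero_mul]
  · simp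

lemma Dl_zero (r : ℕ) (f : ℕ → ℤ) (j : ℕ) (hj : j + 1 < r) (heq : f (j + 1) = f j) :
    Dl r (Function.update f j (f j - 1)) = 0 := by
  apply Matrix.det_zero_of_column_eq (i := (⟨j, by omega⟩ : Fin r)) (j := ⟨j + 1, by omega⟩)
  · intro h
    have := Fin.mk.injEq j (by omega : j < r) (j+1) (by omega) ▸ h
    simp at this
  · intro k
    have h1 : Function.update f j (f j - 1) j = f j - 1 := Function.update_self _ _ _
    have h2 : Function.update f j (f j - 1) (j + 1) = f j := by
      rw [Function.update_of_ne (by omega)]; exact heq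
    simp only [dmat, Matrix.of_apply, h1, h2]
    congr 1
    push_cast
    ring

def cornerRow (μ : YoungDiagram) (i : ℕ) : Prop :=
  i < μ.colLen 0 ∧ μ.rowLen (i + 1) < μ.rowLen i

lemma rowLen_pos {μ : YoungDiagram} {i : ℕ} (h : i < μ.colLen 0) : 0 < μ.rowLen i := by
  rw [← YoungDiagram.mem_iff_lt_rowLen]
  rw [YoungDiagram.mem_iff_lt_colLen]
  exact h

lemma rowLen_pos_iff {μ : YoungDiagram} {i : ℕ} : 0 < μ.rowLen i ↔ i < μ.colLen 0 := by
  rw [← YoungDiagram.mem_iff_lt_rowLen, YoungDiagram.mem_iff_lt_colLen]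

lemma corner_mem {μ : YoungDiagram} {i : ℕ} (h : cornerRow μ i) :
    (i, μ.rowLen i - 1) ∈ μ := by
  rw [YoungDiagram.mem_iff_lt_rowLen]
  have := rowLen_pos h.1
  omega

lemma corner_max {μ : YoungDiagram} {i : ℕ} (h : cornerRow μ i) {d : ℕ × ℕ}
    (hd : d ∈ μ) (h1 : i ≤ d.1) (h2 : μ.rowLen i - 1 ≤ d.2) : d = (i, μ.rowLen i - 1) := by
  have hpos := rowLen_pos h.1
  have hcor := h.2
  have hd2 : d.2 < μ.rowLen d.1 := YoungDiagram.mem_iff_lt_rowLen.mp (by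
    cases d; exact hd)
  rcases Nat.lt_or_ge i d.1 with hlt | hge
  · have : μ.rowLen d.1 ≤ μ.rowLen (i + 1) := μ.rowLen_anti _ _ (by omega)
    omega
  · have hd1 : d.1 = i := le_antisymm hge h1
    have : d.2 = μ.rowLen i - 1 := by rw [hd1] at hd2; omega
    exact Prod.ext hd1 this

noncomputable def eraseYD (μ : YoungDiagram) (i : ℕ) : YoungDiagram :=
  if h : cornerRow μ i then
    { cells := μ.cells.erase (i, μ.rowLen i - 1),
      isLowerSet := by
        intro a b hba ha
        simp only [Finset.coe_erase, Set.mem_diff, Set.mem_singleton_iff] at ha ⊢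
        obtain ⟨ha1, ha2⟩ := ha
        constructor
        · exact μ.isLowerSet hba ha1
        · intro hb
          subst hb
          exact ha2 (corner_max h ha1 hba.1 hba.2) }
  else μ

lemma mem_eraseYD {μ : YoungDiagram} {i : ℕ} (h : cornerRow μ i) {c : ℕ × ℕ} :
    c ∈ eraseYD μ i ↔ c ∈ μ ∧ c ≠ (i, μ.rowLen i - 1) := by
  rw [eraseYD, dif_pos h]
  show c ∈ Finset.erase _ _ ↔ _
  rw [Finset.mem_erase]
  exact and_comm

lemma eraseYD_card {μ : YoungDiagram} {i : ℕ} (h : cornerRow μ i) :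
    (eraseYD μ i).card = μ.card - 1 := by
  rw [eraseYD, dif_pos h]
  exact Finset.card_erase_of_mem (corner_mem h)

lemma rowLen_eq_of {ν : YoungDiagram} {k t : ℕ} (h : ∀ j, (k, j) ∈ ν ↔ j < t) :
    ν.rowLen k = t := by
  have h1 : ∀ j, j < ν.rowLen k ↔ j < t := fun j => by
    rw [← YoungDiagram.mem_iff_lt_rowLen]; exact h j
  by_contra hne
  rcases Nat.lt_or_ge (ν.rowLen k) t with hc | hc
  · exact absurd ((h1 (ν.rowLen k)).mpr hc) (lt_irrefl _)
  · have : t < ν.rowLen k := by omega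
    exact absurd ((h1 t).mp this) (lt_irrefl _)

lemma colLen_eq_of {ν : YoungDiagram} {t : ℕ} (h : ∀ k, (k, 0) ∈ ν ↔ k < t) :
    ν.colLen 0 = t := by
  have h1 : ∀ k, k < ν.colLen 0 ↔ k < t := fun k => by
    rw [← YoungDiagram.mem_iff_lt_colLen]; exact h k
  by_contra hne
  rcases Nat.lt_or_ge (ν.colLen 0) t with hc | hc
  · exact absurd ((h1 (ν.colLen 0)).mpr hc) (lt_irrefl _)
  · have : t < ν.colLen 0 := by omega
    exact absurd ((h1 t).mp this) (lt_irrefl _)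

lemma rowLen_eraseYD {μ : YoungDiagram} {i : ℕ} (h : cornerRow μ i) (k : ℕ) :
    (eraseYD μ i).rowLen k = if k = i then μ.rowLen i - 1 else μ.rowLen k := by
  have hpos := rowLen_pos h.1
  split_ifs with hk
  · subst hk
    apply rowLen_eq_of
    intro j
    rw [mem_eraseYD h, YoungDiagram.mem_iff_lt_rowLen]
    constructor
    · rintro ⟨h1, h2⟩
      have : j ≠ μ.rowLen k - 1 := fun hj => h2 (by rw [hj])
      omega
    · intro hj
      refine ⟨by omega, fun hc => ?_⟩
      have : j = μ.rowLen k - 1 := (Prod.mk.injEq _ _ _ _ ▸ hc).2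
      omega
  · apply rowLen_eq_of
    intro j
    rw [mem_eraseYD h, YoungDiagram.mem_iff_lt_rowLen]
    constructor
    · rintro ⟨h1, _⟩; exact h1
    · intro hj
      refine ⟨hj, fun hc => hk ?_⟩
      exact (Prod.mk.injEq _ _ _ _ ▸ hc).1

lemma colLen_eraseYD {μ : YoungDiagram} {i : ℕ} (h : cornerRow μ i) :
    (eraseYD μ i).colLen 0 = if μ.rowLen i = 1 then μ.colLen 0 - 1 else μ.colLen 0 := by
  have hpos := rowLen_pos h.1
  split_ifs with h1
  · -- last row, i = colLen 0 - 1
    have hcol : μ.colLen 0 = i + 1 := by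
      have hcor := h.2
      have hi := h.1
      have h2 : μ.rowLen (i + 1) = 0 := by omega
      have h3 : ¬ (i + 1 < μ.colLen 0) := fun hc => by
        have := rowLen_pos hc; omega
      omega
    apply colLen_eq_of
    intro k
    rw [mem_eraseYD h, YoungDiagram.mem_iff_lt_colLen]
    constructor
    · rintro ⟨hk1, hk2⟩
      have : k ≠ i := fun hc => hk2 (by rw [hc, h1])
      omega
    · intro hk
      refine ⟨by omega, fun hc => ?_⟩
      have : k = i := (Prod.mk.injEq _ _ _ _ ▸ hc).1
      omega
  · apply colLen_eq_of
    intro k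
    rw [mem_eraseYD h, YoungDiagram.mem_iff_lt_colLen]
    constructor
    · rintro ⟨hk1, _⟩; exact hk1
    · intro hk
      refine ⟨hk, fun hc => ?_⟩
      have h2 := congrArg Prod.snd hc
      simp only at h2
      omega

lemma card_eq_sum_rowLens (μ : YoungDiagram) :
    μ.card = ∑ j ∈ Finset.range (μ.colLen 0), μ.rowLen j := by
  rw [YoungDiagram.card]
  rw [Finset.card_eq_sum_card_fiberwise (f := Prod.fst) (t := Finset.range (μ.colLen 0))]
  · refine Finset.sum_congr rfl fun i _ => ?_
    rw [μ.rowLen_eq_card]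
    congr 1
  · intro c hc
    rw [Finset.mem_coe, Finset.mem_range, ← rowLen_pos_iff]
    rw [Finset.mem_coe, YoungDiagram.mem_cells] at hc
    have : c.2 < μ.rowLen c.1 := YoungDiagram.mem_iff_lt_rowLen.mp (by cases c; exact hc)
    omega

section SYT

variable {μ : YoungDiagram} {i₀ : ℕ}

lemma card_pos_of_corner (h : cornerRow μ i₀) : 0 < μ.card :=
  Finset.card_pos.mpr ⟨_, (YoungDiagram.mem_cells _).mpr (corner_mem h)⟩

lemma mem_erase_of_ne (h : cornerRow μ i₀) {x : ℕ × ℕ} (hx : x ∈ μ.cells)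
    (hne : x ≠ (i₀, μ.rowLen i₀ - 1)) : x ∈ (eraseYD μ i₀).cells := by
  rw [YoungDiagram.mem_cells, mem_eraseYD h]
  exact ⟨(YoungDiagram.mem_cells _).mp hx, hne⟩

lemma mem_of_mem_erase (h : cornerRow μ i₀) {x : ℕ × ℕ}
    (hx : x ∈ (eraseYD μ i₀).cells) : x ∈ μ.cells := by
  rw [YoungDiagram.mem_cells, mem_eraseYD h] at hx
  exact (YoungDiagram.mem_cells _).mpr hx.1

lemma ne_c0_of_mem_erase (h : cornerRow μ i₀) {x : ℕ × ℕ}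
    (hx : x ∈ (eraseYD μ i₀).cells) : x ≠ (i₀, μ.rowLen i₀ - 1) := by
  rw [YoungDiagram.mem_cells, mem_eraseYD h] at hx
  exact hx.2

noncomputable def Ecell (h : cornerRow μ i₀) :
    {c // c ∈ μ.cells} ≃ Option {c // c ∈ (eraseYD μ i₀).cells} where
  toFun x := if hx : (x : ℕ × ℕ) = (i₀, μ.rowLen i₀ - 1) then none
    else some ⟨(x : ℕ × ℕ), mem_erase_of_ne h x.2 hx⟩
  invFun o := o.elim ⟨(i₀, μ.rowLen i₀ - 1), (YoungDiagram.mem_cells _).mpr (corner_mem h)⟩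
    (fun c => ⟨(c : ℕ × ℕ), mem_of_mem_erase h c.2⟩)
  left_inv x := by
    by_cases hx : (x : ℕ × ℕ) = (i₀, μ.rowLen i₀ - 1)
    · dsimp only; rw [dif_pos hx]; exact Subtype.ext hx.symm
    · dsimp only; rw [dif_neg hx]; rfl
  right_inv o := by
    cases o with
    | none => simp
    | some c =>
      have := ne_c0_of_mem_erase h c.2
      simp only [Option.elim]
      exact dif_neg this

lemma Ecell_symm_none (h : cornerRow μ i₀) :
    ((Ecell h).symm none : ℕ × ℕ) = (i₀, μ.rowLen i₀ - 1) := rfl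

lemma Ecell_symm_some (h : cornerRow μ i₀) (c : {c // c ∈ (eraseYD μ i₀).cells}) :
    ((Ecell h).symm (some c) : ℕ × ℕ) = (c : ℕ × ℕ) := rfl

noncomputable def Ffin (h : cornerRow μ i₀) :
    Fin μ.card ≃ Option (Fin (eraseYD μ i₀).card) where
  toFun k := if hk : (k : ℕ) < (eraseYD μ i₀).card then some ⟨(k : ℕ), hk⟩ else none
  invFun o := o.elim
    ⟨(eraseYD μ i₀).card, by
      have h1 := eraseYD_card h; have h2 := card_pos_of_corner h; omega⟩
    (fun j => ⟨(j : ℕ), by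
      have h1 := eraseYD_card h; have h2 := card_pos_of_corner h; have := j.2; omega⟩)
  left_inv k := by
    by_cases hk : (k : ℕ) < (eraseYD μ i₀).card
    · dsimp only; rw [dif_pos hk]; rfl
    · dsimp only; rw [dif_neg hk]
      have h1 := eraseYD_card h; have h2 := card_pos_of_corner h; have h3 := k.2
      exact Fin.ext (by simp only [Option.elim]; omega)
  right_inv o := by
    cases o with
    | none =>
      simp only [Option.elim]
      exact dif_neg (lt_irrefl _)
    | some j =>
      simp only [Option.elim]
      exact dif_pos j.2
  
lemma Ffin_symm_none_coe (h : cornerRow μ i₀) :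
    (((Ffin h).symm none : Fin μ.card) : ℕ) = (eraseYD μ i₀).card := rfl

lemma Ffin_symm_some_coe (h : cornerRow μ i₀) (j : Fin (eraseYD μ i₀).card) :
    (((Ffin h).symm (some j) : Fin μ.card) : ℕ) = (j : ℕ) := rfl

lemma Ffin_apply_of_lt (h : cornerRow μ i₀) (k : Fin μ.card)
    (hk : (k : ℕ) < (eraseYD μ i₀).card) : (Ffin h) k = some ⟨(k : ℕ), hk⟩ := dif_pos hk

lemma Ffin_apply_of_eq (h : cornerRow μ i₀) (k : Fin μ.card)
    (hk : ¬ (k : ℕ) < (eraseYD μ i₀).card) : (Ffin h) k = none := dif_neg hk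

noncomputable def upT (h : cornerRow μ i₀)
    (T' : {c // c ∈ (eraseYD μ i₀).cells} ≃ Fin (eraseYD μ i₀).card) :
    {c // c ∈ μ.cells} ≃ Fin μ.card :=
  (Ecell h).trans (T'.optionCongr.trans (Ffin h).symm)

noncomputable def downT (h : cornerRow μ i₀)
    (T : {c // c ∈ μ.cells} ≃ Fin μ.card) :
    {c // c ∈ (eraseYD μ i₀).cells} ≃ Fin (eraseYD μ i₀).card :=
  Equiv.removeNone ((Ecell h).symm.trans (T.trans (Ffin h)))

lemma optionCongr_removeNone {α β : Type*} (G : Option α ≃ Option β) (hG : G none = none) :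
    (Equiv.removeNone G).optionCongr = G := by
  apply Equiv.ext
  intro o
  cases o with
  | none => simpa using hG.symm
  | some a =>
    have hex : ∃ b, G (some a) = some b := by
      cases hGa : G (some a) with
      | none => exact absurd (G.injective (hGa.trans hG.symm)) (by simp)
      | some b => exact ⟨b, rfl⟩
    have := Equiv.removeNone_some G hex
    simpa using this

lemma down_up (h : cornerRow μ i₀)
    (T' : {c // c ∈ (eraseYD μ i₀).cells} ≃ Fin (eraseYD μ i₀).card) :
    downT h (upT h T') = T' := by
  unfold downT upT
  rw [Equiv.trans_assoc, Equiv.trans_assoc, Equiv.symm_trans_self, Equiv.trans_refl,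
    ← Equiv.trans_assoc, Equiv.symm_trans_self, Equiv.refl_trans,
    Equiv.removeNone_optionCongr]

lemma upT_eval_none (h : cornerRow μ i₀)
    (T : {c // c ∈ μ.cells} ≃ Fin μ.card)
    (hT : ((Ecell h).symm.trans (T.trans (Ffin h))) none = none) :
    upT h (downT h T) = T := by
  unfold downT upT
  rw [optionCongr_removeNone _ hT]
  apply Equiv.ext
  intro x
  simp

end SYT

section SYT2

variable {μ : YoungDiagram} {i₀ : ℕ}

lemma upT_coe_of_ne (h : cornerRow μ i₀)
    (T' : {c // c ∈ (eraseYD μ i₀).cells} ≃ Fin (eraseYD μ i₀).card)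
    (x : {c // c ∈ μ.cells}) (hx : (x : ℕ × ℕ) ≠ (i₀, μ.rowLen i₀ - 1)) :
    ((upT h T') x : ℕ) = (T' ⟨(x : ℕ × ℕ), mem_erase_of_ne h x.2 hx⟩ : ℕ) := by
  have h1 : (Ecell h) x = some ⟨(x : ℕ × ℕ), mem_erase_of_ne h x.2 hx⟩ := by
    simp only [Ecell, Equiv.coe_fn_mk]
    rw [dif_neg hx]
  rw [upT, Equiv.trans_apply, Equiv.trans_apply, h1]
  simp only [Equiv.optionCongr_apply, Option.map_some]
  exact Ffin_symm_some_coe h _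

lemma upT_coe_of_eq (h : cornerRow μ i₀)
    (T' : {c // c ∈ (eraseYD μ i₀).cells} ≃ Fin (eraseYD μ i₀).card)
    (x : {c // c ∈ μ.cells}) (hx : (x : ℕ × ℕ) = (i₀, μ.rowLen i₀ - 1)) :
    ((upT h T') x : ℕ) = (eraseYD μ i₀).card := by
  have h1 : (Ecell h) x = none := by
    simp only [Ecell, Equiv.coe_fn_mk]
    rw [dif_pos hx]
  rw [upT, Equiv.trans_apply, Equiv.trans_apply, h1]
  simp only [Equiv.optionCongr_apply, Option.map_none]
  exact Ffin_symm_none_coe h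

lemma upT_symm_max (h : cornerRow μ i₀)
    (T' : {c // c ∈ (eraseYD μ i₀).cells} ≃ Fin (eraseYD μ i₀).card)
    (k : Fin μ.card) (hk : (k : ℕ) = (eraseYD μ i₀).card) :
    (((upT h T').symm k : {c // c ∈ μ.cells}) : ℕ × ℕ) = (i₀, μ.rowLen i₀ - 1) := by
  rw [upT]
  simp only [Equiv.symm_trans_apply, Equiv.symm_symm]
  have h1 : (Ffin h) k = none := Ffin_apply_of_eq h k (by omega)
  rw [h1]
  have h2 : (T'.optionCongr).symm none = none := by simp
  rw [h2]
  exact Ecell_symm_none h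

lemma Gnone_eq (h : cornerRow μ i₀) (T : {c // c ∈ μ.cells} ≃ Fin μ.card)
    (hT : (T ⟨(i₀, μ.rowLen i₀ - 1),
      (YoungDiagram.mem_cells _).mpr (corner_mem h)⟩ : ℕ) = μ.card - 1) :
    ((Ecell h).symm.trans (T.trans (Ffin h))) none = none := by
  have h0 : (Ecell h).symm none
      = ⟨(i₀, μ.rowLen i₀ - 1), (YoungDiagram.mem_cells _).mpr (corner_mem h)⟩ := rfl
  rw [Equiv.trans_apply, Equiv.trans_apply, h0]
  apply Ffin_apply_of_eq
  have h1 := eraseYD_card h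
  omega

lemma downT_coe (h : cornerRow μ i₀) (T : {c // c ∈ μ.cells} ≃ Fin μ.card)
    (hTn : ((Ecell h).symm.trans (T.trans (Ffin h))) none = none)
    (c : {c // c ∈ (eraseYD μ i₀).cells}) :
    ((downT h T) c : ℕ) = (T ⟨(c : ℕ × ℕ), mem_of_mem_erase h c.2⟩ : ℕ) := by
  set G := (Ecell h).symm.trans (T.trans (Ffin h)) with hG
  have hex : ∃ b, G (some c) = some b := by
    cases hGa : G (some c) with
    | none => exact absurd (G.injective (hGa.trans hTn.symm)) (by simp)
    | some b => exact ⟨b, rfl⟩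
  obtain ⟨b, hb⟩ := hex
  have h1 := Equiv.removeNone_some G ⟨b, hb⟩
  rw [hb] at h1
  rw [downT, ← hG]
  have h2 : G.removeNone c = b := Option.some_injective _ h1
  rw [h2]
  -- now compute G (some c)
  have h3 : G (some c) = (Ffin h) (T ⟨(c : ℕ × ℕ), mem_of_mem_erase h c.2⟩) := by
    rw [hG, Equiv.trans_apply, Equiv.trans_apply]
    rfl
  rw [h3] at hb
  by_cases hlt : ((T ⟨(c : ℕ × ℕ), mem_of_mem_erase h c.2⟩ : Fin μ.card) : ℕ)
      < (eraseYD μ i₀).card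
  · rw [Ffin_apply_of_lt h _ hlt] at hb
    have := Option.some_injective _ hb
    rw [← this]
  · rw [Ffin_apply_of_eq h _ hlt] at hb
    exact absurd hb (by simp)

lemma P_up (h : cornerRow μ i₀)
    (T' : {c // c ∈ (eraseYD μ i₀).cells} ≃ Fin (eraseYD μ i₀).card)
    (hP : ∀ c d : {c // c ∈ (eraseYD μ i₀).cells},
      (c : ℕ × ℕ).1 ≤ (d : ℕ × ℕ).1 → (c : ℕ × ℕ).2 ≤ (d : ℕ × ℕ).2 → c ≠ d → T' c < T' d) :
    ∀ c d : {c // c ∈ μ.cells}, (c : ℕ × ℕ).1 ≤ (d : ℕ × ℕ).1 →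
      (c : ℕ × ℕ).2 ≤ (d : ℕ × ℕ).2 → c ≠ d → (upT h T') c < (upT h T') d := by
  intro c d h1 h2 hne
  by_cases hd : (d : ℕ × ℕ) = (i₀, μ.rowLen i₀ - 1)
  · have hc : (c : ℕ × ℕ) ≠ (i₀, μ.rowLen i₀ - 1) := fun hc =>
      hne (Subtype.ext (hc.trans hd.symm))
    rw [Fin.lt_def, upT_coe_of_ne h T' c hc, upT_coe_of_eq h T' d hd]
    exact (T' _).2
  · by_cases hc : (c : ℕ × ℕ) = (i₀, μ.rowLen i₀ - 1)
    · exfalso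
      apply hd
      have hdμ : (d : ℕ × ℕ) ∈ μ := (YoungDiagram.mem_cells _).mp d.2
      apply corner_max h hdμ
      · rw [hc] at h1; exact h1
      · rw [hc] at h2; exact h2
    · rw [Fin.lt_def, upT_coe_of_ne h T' c hc, upT_coe_of_ne h T' d hd]
      have := hP ⟨(c : ℕ × ℕ), mem_erase_of_ne h c.2 hc⟩ ⟨(d : ℕ × ℕ), mem_erase_of_ne h d.2 hd⟩
        h1 h2 (by intro he; exact hne (Subtype.ext (by have h9 := congrArg Subtype.val he; exact h9)))
      exact Fin.lt_def.mp this

lemma P_down (h : cornerRow μ i₀) (T : {c // c ∈ μ.cells} ≃ Fin μ.card)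
    (hTn : ((Ecell h).symm.trans (T.trans (Ffin h))) none = none)
    (hP : ∀ c d : {c // c ∈ μ.cells}, (c : ℕ × ℕ).1 ≤ (d : ℕ × ℕ).1 →
      (c : ℕ × ℕ).2 ≤ (d : ℕ × ℕ).2 → c ≠ d → T c < T d) :
    ∀ c d : {c // c ∈ (eraseYD μ i₀).cells}, (c : ℕ × ℕ).1 ≤ (d : ℕ × ℕ).1 →
      (c : ℕ × ℕ).2 ≤ (d : ℕ × ℕ).2 → c ≠ d → (downT h T) c < (downT h T) d := by
  intro c d h1 h2 hne
  rw [Fin.lt_def, downT_coe h T hTn c, downT_coe h T hTn d]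
  have := hP ⟨(c : ℕ × ℕ), mem_of_mem_erase h c.2⟩ ⟨(d : ℕ × ℕ), mem_of_mem_erase h d.2⟩
    h1 h2 (by intro he; exact hne (Subtype.ext (by have h9 := congrArg Subtype.val he; exact h9)))
  exact Fin.lt_def.mp this

end SYT2

section SYT3

variable {μ : YoungDiagram}

lemma fSYT_eq (μ : YoungDiagram) : fSYT μ =
    (Finset.univ.filter (fun T : {c // c ∈ μ.cells} ≃ Fin μ.card =>
      ∀ c d : {c // c ∈ μ.cells}, (c : ℕ × ℕ).1 ≤ (d : ℕ × ℕ).1 →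
      (c : ℕ × ℕ).2 ≤ (d : ℕ × ℕ).2 → c ≠ d → T c < T d)).card := by
  rw [fSYT, Set.ncard_eq_toFinset_card', Set.toFinset_setOf]

lemma max_corner (h0 : 0 < μ.card)
    (T : {c // c ∈ μ.cells} ≃ Fin μ.card)
    (hP : ∀ c d : {c // c ∈ μ.cells}, (c : ℕ × ℕ).1 ≤ (d : ℕ × ℕ).1 →
      (c : ℕ × ℕ).2 ≤ (d : ℕ × ℕ).2 → c ≠ d → T c < T d)
    (c : {c // c ∈ μ.cells}) (hc : (T c : ℕ) = μ.card - 1) :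
    cornerRow μ (c : ℕ × ℕ).1 ∧ (c : ℕ × ℕ).2 = μ.rowLen (c : ℕ × ℕ).1 - 1 := by
  have hmem : ((c : ℕ × ℕ).1, (c : ℕ × ℕ).2) ∈ μ := by
    rw [Prod.mk.eta]; exact (YoungDiagram.mem_cells _).mp c.2
  have hmax : ∀ d : {c // c ∈ μ.cells}, (T d : ℕ) ≤ μ.card - 1 := fun d => by
    have := (T d).2; omega
  have hA : ((c : ℕ × ℕ).1, (c : ℕ × ℕ).2 + 1) ∉ μ := by
    intro hmem2
    have hd : ((c : ℕ × ℕ).1, (c : ℕ × ℕ).2 + 1) ∈ μ.cells := (YoungDiagram.mem_cells _).mpr hmem2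
    have hlt := hP c ⟨_, hd⟩ (le_refl _) (by simp) (by
      intro he
      have h9 := congrArg (fun z => ((z : {c // c ∈ μ.cells}) : ℕ × ℕ).2) he
      simp at h9)
    rw [Fin.lt_def, hc] at hlt
    have := hmax ⟨_, hd⟩
    omega
  have hB : ((c : ℕ × ℕ).1 + 1, (c : ℕ × ℕ).2) ∉ μ := by
    intro hmem2
    have hd : ((c : ℕ × ℕ).1 + 1, (c : ℕ × ℕ).2) ∈ μ.cells := (YoungDiagram.mem_cells _).mpr hmem2
    have hlt := hP c ⟨_, hd⟩ (by simp) (le_refl _) (by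
      intro he
      have h9 := congrArg (fun z => ((z : {c // c ∈ μ.cells}) : ℕ × ℕ).1) he
      simp at h9)
    rw [Fin.lt_def, hc] at hlt
    have := hmax ⟨_, hd⟩
    omega
  have h1 : (c : ℕ × ℕ).2 < μ.rowLen (c : ℕ × ℕ).1 := YoungDiagram.mem_iff_lt_rowLen.mp hmem
  have h2 : ¬ ((c : ℕ × ℕ).2 + 1 < μ.rowLen (c : ℕ × ℕ).1) := fun hcon =>
    hA (YoungDiagram.mem_iff_lt_rowLen.mpr hcon)
  have h3 : ¬ ((c : ℕ × ℕ).2 < μ.rowLen ((c : ℕ × ℕ).1 + 1)) := fun hcon =>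
    hB (YoungDiagram.mem_iff_lt_rowLen.mpr hcon)
  have h4 : (c : ℕ × ℕ).1 < μ.colLen (c : ℕ × ℕ).2 := YoungDiagram.mem_iff_lt_colLen.mp hmem
  have h5 : μ.colLen (c : ℕ × ℕ).2 ≤ μ.colLen 0 := μ.colLen_anti 0 _ (Nat.zero_le _)
  exact ⟨⟨by omega, by omega⟩, by omega⟩

lemma fSYT_rec (h0 : 0 < μ.card) :
    fSYT μ = ∑ i ∈ Finset.filter (cornerRow μ) (Finset.range (μ.colLen 0)),
      fSYT (eraseYD μ i) := by
  classical
  rw [fSYT_eq]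
  rw [Finset.card_eq_sum_card_fiberwise
    (f := fun T : {c // c ∈ μ.cells} ≃ Fin μ.card =>
      ((T.symm ⟨μ.card - 1, by omega⟩ : {c // c ∈ μ.cells}) : ℕ × ℕ).1)
    (t := Finset.filter (cornerRow μ) (Finset.range (μ.colLen 0)))]
  · apply Finset.sum_congr rfl
    intro i₀ hi₀
    have hcr : cornerRow μ i₀ := (Finset.mem_filter.mp hi₀).2
    rw [fSYT_eq]
    -- key fact about members of the fiber
    have hfib : ∀ T : {c // c ∈ μ.cells} ≃ Fin μ.card,
        T ∈ (Finset.univ.filter (fun T : {c // c ∈ μ.cells} ≃ Fin μ.card =>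
          ∀ c d : {c // c ∈ μ.cells}, (c : ℕ × ℕ).1 ≤ (d : ℕ × ℕ).1 →
          (c : ℕ × ℕ).2 ≤ (d : ℕ × ℕ).2 → c ≠ d → T c < T d)).filter
          (fun T => ((T.symm ⟨μ.card - 1, by omega⟩ : {c // c ∈ μ.cells}) : ℕ × ℕ).1 = i₀) →
        (∀ c d : {c // c ∈ μ.cells}, (c : ℕ × ℕ).1 ≤ (d : ℕ × ℕ).1 →
          (c : ℕ × ℕ).2 ≤ (d : ℕ × ℕ).2 → c ≠ d → T c < T d) ∧
        (T ⟨(i₀, μ.rowLen i₀ - 1), (YoungDiagram.mem_cells _).mpr (corner_mem hcr)⟩ : ℕ)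
          = μ.card - 1 := by
      intro T hT
      rw [Finset.mem_filter, Finset.mem_filter] at hT
      obtain ⟨⟨-, hP⟩, hrow⟩ := hT
      refine ⟨hP, ?_⟩
      set c := T.symm ⟨μ.card - 1, by omega⟩ with hcdef
      have hc : (T c : ℕ) = μ.card - 1 := by rw [hcdef, Equiv.apply_symm_apply]
      obtain ⟨hcor, hcol⟩ := max_corner h0 T hP c hc
      have hcoord : (c : ℕ × ℕ) = (i₀, μ.rowLen i₀ - 1) := by
        have : (c : ℕ × ℕ).1 = i₀ := hrow
        rw [Prod.ext_iff]
        exact ⟨this, by rw [hcol, this]⟩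
      have : (⟨(i₀, μ.rowLen i₀ - 1),
          (YoungDiagram.mem_cells _).mpr (corner_mem hcr)⟩ : {c // c ∈ μ.cells}) = c :=
        Subtype.ext hcoord.symm
      rw [this, hc]
    refine Finset.card_bij' (fun T hT => downT hcr T) (fun T' hT' => upT hcr T') ?_ ?_ ?_ ?_
    · -- downT lands in SYT μ'
      intro T hT
      obtain ⟨hP, hval⟩ := hfib T hT
      rw [Finset.mem_filter]
      exact ⟨Finset.mem_univ _, P_down hcr T (Gnone_eq hcr T hval) hP⟩
    · -- upT lands in the fiber
      intro T' hT'
      rw [Finset.mem_filter] at hT'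
      rw [Finset.mem_filter, Finset.mem_filter]
      refine ⟨⟨Finset.mem_univ _, P_up hcr T' hT'.2⟩, ?_⟩
      have hk : ((⟨μ.card - 1, by omega⟩ : Fin μ.card) : ℕ) = (eraseYD μ i₀).card := by
        have := eraseYD_card hcr; simp; omega
      rw [upT_symm_max hcr T' _ hk]
    · -- up (down T) = T
      intro T hT
      obtain ⟨hP, hval⟩ := hfib T hT
      exact upT_eval_none hcr T (Gnone_eq hcr T hval)
    · -- down (up T') = T'
      intro T' _
      exact down_up hcr T'
  · -- fiber map lands in corners
    intro T hT
    rw [Finset.mem_coe, Finset.mem_filter] at hT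
    set c := T.symm ⟨μ.card - 1, by omega⟩ with hcdef
    have hc : (T c : ℕ) = μ.card - 1 := by rw [hcdef, Equiv.apply_symm_apply]
    obtain ⟨hcor, -⟩ := max_corner h0 T hT.2 c hc
    rw [Finset.mem_coe, Finset.mem_filter, Finset.mem_range]
    exact ⟨hcor.1, hcor⟩

end SYT3

lemma ExpDelta_eq (μ : YoungDiagram) :
    ExpDelta μ = Dl (μ.colLen 0) (fun j => (μ.rowLen j : ℤ)) := rfl

lemma card_zero_colLen {μ : YoungDiagram} (h : μ.card = 0) : μ.colLen 0 = 0 := by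
  by_contra hc
  have h1 : (0, 0) ∈ μ := YoungDiagram.mem_iff_lt_colLen.mpr (by omega)
  have h2 : (0, 0) ∈ μ.cells := (YoungDiagram.mem_cells _).mpr h1
  have h3 := Finset.card_pos.mpr ⟨_, h2⟩
  have h4 : μ.cells.card = 0 := h
  omega

lemma fSYT_card_zero {μ : YoungDiagram} (h : μ.card = 0) : fSYT μ = 1 := by
  haveI h1 : IsEmpty {c // c ∈ μ.cells} := by
    constructor
    rintro ⟨c, hc⟩
    rw [Finset.card_eq_zero.mp h] at hc
    exact absurd hc (Finset.notMem_empty _)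
  haveI h2 : IsEmpty (Fin μ.card) := by rw [h]; infer_instance
  rw [fSYT]
  have hset : {T : {c // c ∈ μ.cells} ≃ Fin μ.card |
      ∀ c d : {c // c ∈ μ.cells}, (c : ℕ × ℕ).1 ≤ (d : ℕ × ℕ).1 →
      (c : ℕ × ℕ).2 ≤ (d : ℕ × ℕ).2 → c ≠ d → T c < T d} = Set.univ := by
    ext T
    simp only [Set.mem_setOf_eq, Set.mem_univ, iff_true]
    intro c
    exact isEmptyElim c
  rw [hset, Set.ncard_univ]
  haveI : Unique ({c // c ∈ μ.cells} ≃ Fin μ.card) :=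
    { default := Equiv.equivOfIsEmpty _ _,
      uniq := fun e => Equiv.ext fun c => isEmptyElim c }
  exact Nat.card_unique

theorem main_det : ∀ n : ℕ, ∀ μ : YoungDiagram, μ.card = n →
    (Nat.factorial n : ℚ) * ExpDelta μ = (fSYT μ : ℚ) := by
  intro n
  induction n using Nat.strong_induction_on with
  | _ n ih =>
  intro μ hn
  rcases Nat.eq_zero_or_pos n with h0 | h0
  · subst h0
    have hcol : μ.colLen 0 = 0 := card_zero_colLen hn
    rw [fSYT_card_zero hn]
    haveI : IsEmpty (Fin (μ.colLen 0)) := by rw [hcol]; infer_instance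
    unfold ExpDelta
    rw [Matrix.det_isEmpty]
    simp
  · obtain ⟨m, rfl⟩ : ∃ m, n = m + 1 := ⟨n - 1, by omega⟩
    set r := μ.colLen 0 with hr
    have hrpos : 0 < r := by
      have hmem : (0, 0) ∈ μ := by
        obtain ⟨c, hc⟩ := Finset.card_pos.mp (show 0 < μ.card by omega)
        exact μ.up_left_mem (Nat.zero_le _) (Nat.zero_le _) ((YoungDiagram.mem_cells _).mp hc)
      rw [hr]
      exact YoungDiagram.mem_iff_lt_colLen.mp hmem
    set f : ℕ → ℤ := fun j => (μ.rowLen j : ℤ) with hf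
    have hsum : (∑ j : Fin r, ((f j : ℤ) : ℚ)) = ((m + 1 : ℕ) : ℚ) := by
      have h1 := card_eq_sum_rowLens μ
      rw [hn] at h1
      calc (∑ j : Fin r, ((f j : ℤ) : ℚ))
          = ∑ j ∈ Finset.range r, ((μ.rowLen j : ℕ) : ℚ) := by
            rw [← Fin.sum_univ_eq_sum_range]
            refine Finset.sum_congr rfl fun j _ => ?_
            rw [hf]; push_cast; ring
        _ = ((∑ j ∈ Finset.range r, μ.rowLen j : ℕ) : ℚ) := by push_cast; ring
        _ = ((m + 1 : ℕ) : ℚ) := by rw [← h1]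
    -- terms at non-corners vanish
    have hzero : ∀ j ∈ Finset.filter (fun j => ¬ cornerRow μ j) (Finset.range r),
        Dl r (Function.update f j (f j - 1)) = 0 := by
      intro j hj
      rw [Finset.mem_filter, Finset.mem_range] at hj
      obtain ⟨hjr, hnc⟩ := hj
      have hjc : j < μ.colLen 0 := by rw [← hr]; exact hjr
      have heq : μ.rowLen (j + 1) = μ.rowLen j := by
        have h2 := μ.rowLen_anti j (j + 1) (by omega)
        have h3 : ¬ (μ.rowLen (j + 1) < μ.rowLen j) := fun hc => hnc ⟨hjc, hc⟩
        omega
      have hj1 : j + 1 < r := by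
        have := rowLen_pos hjc
        have : 0 < μ.rowLen (j + 1) := by omega
        rw [hr]
        exact rowLen_pos_iff.mp this
      exact Dl_zero r f j hj1 (by rw [hf]; exact_mod_cast congrArg _ heq)
    -- terms at corners equal ExpDelta of the erased diagram
    have hterm : ∀ j ∈ Finset.filter (cornerRow μ) (Finset.range r),
        Dl r (Function.update f j (f j - 1)) = ExpDelta (eraseYD μ j) := by
      intro j hj
      rw [Finset.mem_filter] at hj
      have hcr : cornerRow μ j := hj.2
      have hpos : 0 < μ.rowLen j := rowLen_pos hcr.1
      by_cases h1 : μ.rowLen j = 1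
      · have hj1 : ¬ (j + 1 < r) := by
          intro hcon
          have := rowLen_pos (show j + 1 < μ.colLen 0 by rw [← hr]; exact hcon)
          have := hcr.2
          omega
        have hjeq : j = r - 1 := by
          have := hcr.1; rw [← hr] at *; omega
        have hcol' : (eraseYD μ j).colLen 0 = r - 1 := by
          rw [colLen_eraseYD hcr, if_pos h1]
        rw [ExpDelta_eq, hcol']
        have hrw : Dl r (Function.update f j (f j - 1))
            = Dl ((r - 1) + 1) (Function.update f j (f j - 1)) := by
          congr 1
          omega
        rw [hrw, Dl_pad]
        · apply Dl_congr
          intro k hk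
          rw [Function.update_of_ne (by omega)]
          rw [hf]
          simp only
          rw [rowLen_eraseYD hcr, if_neg (by omega)]
        · rw [show r - 1 = j from hjeq.symm, Function.update_self, hf]
          simp [h1]
      · have hcol' : (eraseYD μ j).colLen 0 = r := by
          rw [colLen_eraseYD hcr, if_neg h1]
        rw [ExpDelta_eq, hcol']
        apply Dl_congr
        intro k hk
        by_cases hkj : k = j
        · subst hkj
          rw [Function.update_self, hf]
          simp only
          rw [rowLen_eraseYD hcr, if_pos rfl]
          omega
        · rw [Function.update_of_ne hkj, hf]
          simp only
          rw [rowLen_eraseYD hcr, if_neg hkj]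
    have key : ((m + 1 : ℕ) : ℚ) * ExpDelta μ
        = ∑ j ∈ Finset.filter (cornerRow μ) (Finset.range r), ExpDelta (eraseYD μ j) := by
      rw [ExpDelta_eq, ← hr, ← hf, ← hsum, detRec r f]
      rw [Fin.sum_univ_eq_sum_range (fun j => Dl r (Function.update f j (f j - 1))) r]
      rw [← Finset.sum_filter_add_sum_filter_not (Finset.range r) (cornerRow μ)]
      rw [Finset.sum_eq_zero hzero, add_zero]
      exact Finset.sum_congr rfl hterm
    have hcards : ∀ j ∈ Finset.filter (cornerRow μ) (Finset.range r),
        (eraseYD μ j).card = m := by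
      intro j hj
      rw [Finset.mem_filter] at hj
      rw [eraseYD_card hj.2, hn]
      omega
    calc ((m + 1).factorial : ℚ) * ExpDelta μ
        = (m.factorial : ℚ) * (((m + 1 : ℕ) : ℚ) * ExpDelta μ) := by
          rw [Nat.factorial_succ]; push_cast; ring
      _ = ∑ j ∈ Finset.filter (cornerRow μ) (Finset.range r),
            (m.factorial : ℚ) * ExpDelta (eraseYD μ j) := by
          rw [key, Finset.mul_sum]
      _ = ∑ j ∈ Finset.filter (cornerRow μ) (Finset.range r),
            ((fSYT (eraseYD μ j) : ℕ) : ℚ) := by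
          refine Finset.sum_congr rfl fun j hj => ?_
          exact ih m (by omega) _ (hcards j hj)
      _ = ((fSYT μ : ℕ) : ℚ) := by
          rw [fSYT_rec (show 0 < μ.card by omega)]
          rw [← hr]
          push_cast
          ring


theorem stmt3 (μ : YoungDiagram) :
    ExpDelta μ = (fSYT μ : ℚ) / (Nat.factorial μ.card : ℚ) ∧ 0 ≤ ExpDelta μ := by
  have h := main_det μ.card μ rfl
  have hfac : ((Nat.factorial μ.card : ℕ) : ℚ) ≠ 0 :=
    Nat.cast_ne_zero.mpr (Nat.factorial_ne_zero _)
  have heq : ExpDelta μ = (fSYT μ : ℚ) / (Nat.factorial μ.card : ℚ) := by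
    rw [eq_div_iff hfac, mul_comm]
    exact h
  refine ⟨heq, ?_⟩
  rw [heq]
  positivity
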